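/- arXiv:1703.02478 — 2 statements merged into one kernel-verified Lean document; each statement's English description precedes it below -/
import Mathlib

section
/- Let F be a subfield of ℂ that is finitely generated as a field extension of ℚ. Then the set {θ ∈ [0, π] : θ is a rational multiple of π and cos²θ ∈ F} is finite. -/
/-!
Algebraic elements of a finitely generated field over `K` have bounded degree over `K`: adjoining
a transcendental element creates no new algebraic elements, and after adjoining an element of
degree `d` over `E`, an algebraic `α` has degree at most `d` over the field generated by the
coefficients of its minimal polynomial over `E`, which are themselves algebraic elements of `E`.

If `θ = rπ` and `cos² θ ∈ F`, then `ζ = exp (θ i)` is a root of unity and a root of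
`X⁴ + (2 - 4 cos² θ) X² + 1`, so its degree over `ℚ` is bounded. By Northcott's theorem there
are only finitely many cyclotomic polynomials of bounded degree, hence finitely many such `ζ`,
and `θ ↦ exp (θ i)` is injective on `[0, π]`.
-/

open Polynomial IntermediateField Module

namespace IntermediateField

variable {K L : Type*} [Field K] [Field L] [Algebra K L]

theorem natDegree_minpoly_le_finrank (M : IntermediateField K L) [FiniteDimensional K M]
    {α : L} (hα : α ∈ M) : (minpoly K α).natDegree ≤ finrank K M := by
  rw [← minpoly_eq ⟨α, hα⟩]
  exact minpoly.natDegree_le _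

theorem natDegree_minpoly_le_finrank_mul (M : IntermediateField K L) [FiniteDimensional K M]
    {α : L} {q : M[X]} (hq : q.Monic) (hqα : aeval α q = 0) :
    (minpoly K α).natDegree ≤ finrank K M * q.natDegree := by
  have hαM : IsIntegral M α := ⟨q, hq, hqα⟩
  have : FiniteDimensional M M⟮α⟯ := adjoin.finiteDimensional hαM
  have : FiniteDimensional K (restrictScalars K M⟮α⟯) := FiniteDimensional.trans K M M⟮α⟯
  calc (minpoly K α).natDegree ≤ finrank K (restrictScalars K M⟮α⟯) :=
        natDegree_minpoly_le_finrank _ (mem_adjoin_simple_self M α)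
    _ = finrank K M * finrank M M⟮α⟯ :=
        have := Module.Free.of_divisionRing M M⟮α⟯
        (finrank_mul_finrank K M M⟮α⟯).symm
    _ ≤ finrank K M * q.natDegree := by
        rw [adjoin.finrank hαM]
        exact Nat.mul_le_mul_left _ (natDegree_le_of_dvd (minpoly.dvd M α hqα) hq.ne_zero)

theorem finrank_adjoin_finset_le_pow {N : ℕ} (t : Finset L)
    (ht : ∀ x ∈ t, IsIntegral K x ∧ (minpoly K x).natDegree ≤ N) :
    finrank K (adjoin K (t : Set L)) ≤ N ^ t.card := by
  classical
  induction t using Finset.induction_on with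
  | empty =>
    rw [Finset.coe_empty, adjoin_empty, IntermediateField.finrank_bot, Finset.card_empty,
      pow_zero]
  | insert a t hat ih =>
    obtain ⟨ha, haN⟩ := ht a (Finset.mem_insert_self a t)
    rw [Finset.coe_insert, ← Set.singleton_union, adjoin_union, Finset.card_insert_of_notMem hat,
      pow_succ']
    calc _ ≤ finrank K K⟮a⟯ * finrank K (adjoin K (t : Set L)) := finrank_sup_le _ _
      _ ≤ N * N ^ t.card := Nat.mul_le_mul (by rwa [adjoin.finrank ha])
          (ih fun x hx => ht x (Finset.mem_insert_of_mem hx))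

theorem mem_of_isAlgebraic_of_mem_adjoin_transcendental (E : IntermediateField K L) {x α : L}
    (hx : Transcendental E x) (hα : α ∈ E⟮x⟯) (halg : IsAlgebraic E α) : α ∈ E := by
  set e := RatFunc.algEquivOfTranscendental x hx
  have : IsAlgebraic E (e.symm ⟨α, hα⟩) :=
    ((isAlgebraic_algebraMap_iff (algebraMap E⟮x⟯ L).injective).mp halg).algHom e.symm.toAlgHom
  obtain ⟨c, hc⟩ : ∃ c, e.symm ⟨α, hα⟩ = RatFunc.C c := by
    by_contra h
    exact RatFunc.transcendental_of_ne_C _ h this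
  have := congrArg (fun f => (e f : L)) hc
  simp only [AlgEquiv.apply_symm_apply, ← RatFunc.algebraMap_eq_C, AlgEquiv.commutes,
    SubalgebraClass.coe_algebraMap, algebraMap_apply] at this
  exact this ▸ c.2

end IntermediateField

variable {K L : Type*} [Field K] [Field L] [Algebra K L]

variable (K) in
def BoundedAlgebraicDegree (S : Set L) : Prop :=
  ∃ N, ∀ α ∈ S, IsIntegral K α → (minpoly K α).natDegree ≤ N

namespace BoundedAlgebraicDegree

theorem of_finiteDimensional (M : IntermediateField K L) [FiniteDimensional K M] :
    BoundedAlgebraicDegree K (M : Set L) :=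
  ⟨finrank K M, fun _ hα _ => natDegree_minpoly_le_finrank M hα⟩

theorem adjoin_simple_of_transcendental {E : IntermediateField K L}
    (hE : BoundedAlgebraicDegree K (E : Set L)) {a : L} (ha : Transcendental E a) :
    BoundedAlgebraicDegree K (E⟮a⟯ : Set L) :=
  let ⟨N, hN⟩ := hE
  ⟨N, fun α hα hαK => hN α (mem_of_isAlgebraic_of_mem_adjoin_transcendental E ha hα
    hαK.tower_top.isAlgebraic) hαK⟩

theorem adjoin_simple_of_isIntegral {E : IntermediateField K L}
    (hE : BoundedAlgebraicDegree K (E : Set L)) {a : L} (ha : IsIntegral E a) :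
    BoundedAlgebraicDegree K (E⟮a⟯ : Set L) := by
  obtain ⟨N, hN⟩ := hE
  have : FiniteDimensional E E⟮a⟯ := adjoin.finiteDimensional ha
  set d := finrank E E⟮a⟯
  refine ⟨(N + 1) ^ (d + 1) * d, fun α hα hαK => ?_⟩
  have hαE : IsIntegral E α := hαK.tower_top
  set P := (minpoly E α).map (algebraMap E L)
  have hPd : P.natDegree ≤ d := by
    rw [natDegree_map]
    exact natDegree_minpoly_le_finrank _ hα
  have hcoeffs : ∀ c ∈ P.coeffs, c ∈ E ∧ IsIntegral K c := by
    intro c hc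
    obtain ⟨n, -, rfl⟩ := mem_coeffs_iff.mp hc
    refine ⟨by simp [P], isIntegral_coeff_of_dvd _ P (minpoly.monic hαK)
      ((minpoly.monic hαE).map _) ?_ n⟩
    have := map_dvd (algebraMap E L) (minpoly.dvd_map_of_isScalarTower K E α)
    rwa [Polynomial.map_map, ← IsScalarTower.algebraMap_eq] at this
  set M := adjoin K (P.coeffs : Set L)
  have : FiniteDimensional K M := finiteDimensional_adjoin fun c hc => (hcoeffs c hc).2
  have hM : finrank K M ≤ (N + 1) ^ (d + 1) := calc
    finrank K M ≤ N ^ P.coeffs.card := finrank_adjoin_finset_le_pow _ fun c hc =>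
        ⟨(hcoeffs c hc).2, hN c (hcoeffs c hc).1 (hcoeffs c hc).2⟩
    _ ≤ (N + 1) ^ (d + 1) := by
        refine (Nat.pow_le_pow_left N.le_succ _).trans (Nat.pow_le_pow_right N.succ_pos ?_)
        classical
        exact (Finset.card_image_le.trans P.card_supp_le_succ_natDegree).trans (by omega)
  have hlifts : P ∈ lifts (algebraMap M L) := by
    refine (lifts_iff_coeff_lifts P).mpr fun n => ?_
    by_cases hn : P.coeff n = 0
    · exact ⟨0, by simp [hn]⟩
    · exact ⟨⟨_, subset_adjoin K _ (coeff_mem_coeffs hn)⟩, rfl⟩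
  obtain ⟨q, hqP, hqdeg, hq⟩ :=
    lifts_and_natDegree_eq_and_monic hlifts ((minpoly.monic hαE).map _)
  have hqα : aeval α q = 0 := by
    rw [aeval_def, eval₂_eq_eval_map, hqP, eval_map, ← aeval_def, minpoly.aeval]
  calc (minpoly K α).natDegree ≤ finrank K M * q.natDegree :=
        natDegree_minpoly_le_finrank_mul M hq hqα
    _ ≤ (N + 1) ^ (d + 1) * d := Nat.mul_le_mul hM (hqdeg ▸ hPd)

theorem adjoin_simple {E : IntermediateField K L} (hE : BoundedAlgebraicDegree K (E : Set L))
    (a : L) : BoundedAlgebraicDegree K (E⟮a⟯ : Set L) := by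
  by_cases ha : IsAlgebraic E a
  · exact hE.adjoin_simple_of_isIntegral ha.isIntegral
  · exact hE.adjoin_simple_of_transcendental ha

end BoundedAlgebraicDegree

theorem boundedAlgebraicDegree_adjoin_finset (s : Finset L) :
    BoundedAlgebraicDegree K (adjoin K (s : Set L) : Set L) := by
  classical
  induction s using Finset.induction_on with
  | empty =>
    rw [Finset.coe_empty, adjoin_empty]
    exact .of_finiteDimensional ⊥
  | insert a s _ ih =>
    rw [Finset.coe_insert, ← Set.union_singleton, ← adjoin_adjoin_left]
    exact ih.adjoin_simple a

namespace Complex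

theorem finite_setOf_isOfFinOrder_natDegree_minpoly_le (d : ℕ) :
    {ζ : ℂ | IsOfFinOrder ζ ∧ (minpoly ℚ ζ).natDegree ≤ d}.Finite := by
  refine ((finite_mahlerMeasure_le d 1).biUnion fun p _ => p.rootSet_finite ℂ).subset ?_
  rintro ζ ⟨hζ, hd⟩
  have hprim := IsPrimitiveRoot.orderOf ζ
  have hpos := hζ.orderOf_pos
  refine Set.mem_iUnion₂.2 ⟨cyclotomic (orderOf ζ) ℤ, ⟨?_, ?_⟩, ?_⟩
  · rwa [natDegree_cyclotomic, ← natDegree_cyclotomic _ ℚ,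
      cyclotomic_eq_minpoly_rat hprim hpos]
  · simpa using (cyclotomic_mahlerMeasure_eq_one (R := ℤ) (orderOf ζ)).le
  · rw [mem_rootSet, cyclotomic_eq_minpoly hprim hpos]
    exact ⟨minpoly.ne_zero (hprim.isIntegral hpos), minpoly.aeval ℤ ζ⟩

theorem isOfFinOrder_exp_mul_I {θ : ℝ} (hθ : ∃ r : ℚ, θ = r * Real.pi) :
    IsOfFinOrder (exp (θ * I)) := by
  obtain ⟨r, rfl⟩ := hθ
  refine isOfFinOrder_iff_pow_eq_one.2 ⟨2 * r.den, by positivity, ?_⟩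
  have hr : (r.den : ℂ) * r = r.num := by exact_mod_cast Rat.den_mul_eq_num r
  rw [← exp_nat_mul, ← exp_int_mul_two_pi_mul_I r.num]
  congr 1
  push_cast
  linear_combination (2 * Real.pi * I) * hr

theorem exp_mul_I_pow_four_add (θ : ℂ) :
    exp (θ * I) ^ 4 + (2 - 4 * cos θ ^ 2) * exp (θ * I) ^ 2 + 1 = 0 := by
  have h2cos := two_cos θ
  have hinv : exp (θ * I) * exp (-θ * I) = 1 := by rw [← exp_add]; simp
  linear_combination -(exp (θ * I) ^ 2 * (2 * cos θ + exp (θ * I) + exp (-θ * I))) * h2cos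
    - (2 * exp (θ * I) ^ 2 + 1 + exp (θ * I) * exp (-θ * I)) * hinv

theorem isIntegral_cos_sq {θ : ℝ} (h : IsIntegral ℚ (exp (θ * I))) :
    IsIntegral ℚ ((Real.cos θ : ℂ) ^ 2) := by
  have hcos : (Real.cos θ : ℂ) = (2⁻¹ : ℚ) • (exp (θ * I) + (exp (θ * I))⁻¹) := by
    rw [ofReal_cos, cos, ← exp_neg, Rat.smul_def]
    push_cast
    ring_nf
  rw [hcos]
  exact ((h.add h.inv).smul _).pow 2

theorem natDegree_minpoly_exp_mul_I_le (θ : ℝ) (hc : IsIntegral ℚ ((Real.cos θ : ℂ) ^ 2)) :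
    (minpoly ℚ (exp (θ * I))).natDegree ≤
      (minpoly ℚ ((Real.cos θ : ℂ) ^ 2)).natDegree * 4 := by
  set c : ℂ := (Real.cos θ : ℂ) ^ 2
  have : FiniteDimensional ℚ ℚ⟮c⟯ := adjoin.finiteDimensional hc
  set q : ℚ⟮c⟯[X] := X ^ 4 + C (2 - 4 * AdjoinSimple.gen ℚ c) * X ^ 2 + 1
  have hq : q.Monic := by unfold q; monicity!
  have hdeg : q.natDegree = 4 := by unfold q; compute_degree!
  rw [← adjoin.finrank hc, ← hdeg]
  refine natDegree_minpoly_le_finrank_mul _ hq ?_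
  simp only [q, c, map_add, map_mul, map_pow, map_sub, map_ofNat, map_one, aeval_X, aeval_C,
    AdjoinSimple.algebraMap_gen, ofReal_cos]
  exact exp_mul_I_pow_four_add θ

end Complex

/-- Let F be a subfield of ℂ that is finitely generated as a field extension of ℚ.
Then the set of θ ∈ [0, π] that are rational multiples of π with cos²θ ∈ F is finite. -/
theorem stmt_1 (F : Subfield ℂ) (hF : ∃ s : Finset ℂ, F = Subfield.closure (s : Set ℂ)) :
    {θ : ℝ | θ ∈ Set.Icc 0 Real.pi ∧ (∃ r : ℚ, θ = (r : ℝ) * Real.pi) ∧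
      ((Real.cos θ : ℂ)) ^ 2 ∈ F}.Finite := by
  obtain ⟨s, rfl⟩ := hF
  obtain ⟨N, hN⟩ := boundedAlgebraicDegree_adjoin_finset (K := ℚ) s
  have hclosure : Subfield.closure (s : Set ℂ) ≤ (adjoin ℚ (s : Set ℂ)).toSubfield :=
    Subfield.closure_le.mpr (subset_adjoin ℚ _)
  have hinj : Set.InjOn (fun θ : ℝ => Complex.exp (θ * Complex.I)) (Set.Icc 0 Real.pi) :=
    fun θ₁ h₁ θ₂ h₂ h =>
      Circle.exp_injOn_Icc (by linarith [Real.pi_pos]) h₁ h₂ (Subtype.ext (by simpa using h))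
  refine Set.Finite.of_finite_image
    ((Complex.finite_setOf_isOfFinOrder_natDegree_minpoly_le (N * 4)).subset ?_)
    (hinj.mono fun θ hθ => hθ.1)
  rintro _ ⟨θ, ⟨-, hθ, hcos⟩, rfl⟩
  have hζ := Complex.isOfFinOrder_exp_mul_I hθ
  have hc := Complex.isIntegral_cos_sq
    ((IsPrimitiveRoot.orderOf _).isIntegral hζ.orderOf_pos).tower_top
  exact ⟨hζ, (Complex.natDegree_minpoly_exp_mul_I_le θ hc).trans
    (Nat.mul_le_mul_right 4 (hN _ (hclosure hcos) hc))⟩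
end

section
/- Let F be a subfield of ℂ, let T be a subfield of F with T = ℚ(S) for a set S algebraically independent over ℚ (allowing S = ∅, i.e. T = ℚ), and suppose the degree n = [F : T] is finite. If p, q are coprime positive integers and cos²((p/q)π) ∈ F, then φ(q) ≤ 2n, where φ is Euler's totient function. -/
/-!
Put `θ = pπ/q` and `ζ = e^{2iθ}`, a primitive `q`-th root of unity. Since
`ζ² - 2 cos(2θ) ζ + 1 = 0` and `2 cos 2θ = 2 (2 cos² θ - 1) ∈ F`, the degree of `ζ` over `F` is at
most `2`, so its degree over `T` is at most `2 [F : T]`. On the other hand `ℚ` is algebraically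
closed in the purely transcendental extension `T = ℚ(S)`: the minimal polynomial of `ζ` over `T`
has algebraic coefficients, hence is defined over `ℚ`, so it is the cyclotomic polynomial `Φ_q` of
degree `φ(q)`.
-/

open IntermediateField

namespace AlgebraicIndependent

open MvPolynomial

variable {ι k E : Type*} [Field k] [Field E] [Algebra k E] {x : ι → E}

theorem mem_bot_of_mem_adjoin_of_isAlgebraic (hx : AlgebraicIndependent k x) {a : E}
    (ha : a ∈ adjoin k (Set.range x)) (halg : IsAlgebraic k a) :
    a ∈ (⊥ : IntermediateField k E) := by
  obtain ⟨r, hr, s, hs, hrs⟩ := mem_adjoin_iff_div.mp ha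
  rw [Algebra.adjoin_range_eq_range_aeval] at hr hs
  obtain ⟨P, rfl⟩ := hr
  obtain ⟨Q, rfl⟩ := hs
  by_cases hQ : Q = 0
  · simp [hrs, hQ]
  obtain ⟨μ, hμ⟩ := ne_zero_iff.mp hQ
  have haQ : a * aeval x Q = aeval x P :=
    hrs ▸ div_mul_cancel₀ _ fun h => hQ (hx.eq_zero_of_aeval_eq_zero Q h)
  -- `x` stays algebraically independent over `k⟮a⟯`, so `a • Q = P` already holds in `k⟮a⟯[x]`.
  have : FiniteDimensional k k⟮a⟯ := adjoin.finiteDimensional halg.isIntegral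
  let φ := MvPolynomial.map (σ := ι) (algebraMap k k⟮a⟯)
  have hrel : aeval x (C (AdjoinSimple.gen k a) * φ Q - φ P) = 0 := by
    simp [φ, aeval_map_algebraMap, haQ]
  have hcoeff := congrArg (coeff μ) ((hx.extendScalars k⟮a⟯).eq_zero_of_aeval_eq_zero _ hrel)
  simp only [φ, coeff_sub, coeff_C_mul, coeff_map, coeff_zero, sub_eq_zero] at hcoeff
  refine mem_bot.mpr ⟨coeff μ P / coeff μ Q, ?_⟩
  have := congrArg (algebraMap k⟮a⟯ E) hcoeff
  simp only [map_mul, AdjoinSimple.algebraMap_gen, ← IsScalarTower.algebraMap_apply] at this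
  rw [map_div₀, ← this, mul_div_cancel_right₀ _ ((map_ne_zero _).mpr hμ)]

theorem minpoly_adjoin_eq_map {s : Set E} (hs : AlgebraicIndependent k ((↑) : s → E))
    {A : Type*} [Ring A] [Algebra k A] [Algebra (adjoin k s) A] [IsScalarTower k (adjoin k s) A]
    {z : A} (hz : IsIntegral k z) :
    minpoly (adjoin k s) z = (minpoly k z).map (algebraMap k (adjoin k s)) := by
  set f := minpoly (adjoin k s) z
  have hdvd : f ∣ (minpoly k z).map (algebraMap k (adjoin k s)) :=
    minpoly.dvd_map_of_isScalarTower k _ z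
  have hf : f.Monic := minpoly.monic hz.tower_top
  -- the coefficients of `f` are integral over `k` since `f` divides `minpoly k z`, hence lie in `k`
  have hlifts : f ∈ Polynomial.lifts (algebraMap k (adjoin k s)) := by
    refine (Polynomial.lifts_iff_coeff_lifts f).mpr fun n => ?_
    have hint := Polynomial.isIntegral_coeff_of_dvd _ f (minpoly.monic hz) hf hdvd n
    obtain ⟨r, hr⟩ := mem_bot.mp <| hs.mem_bot_of_mem_adjoin_of_isAlgebraic
      (by simp) (hint.map (adjoin k s).val).isAlgebraic
    exact ⟨r, Subtype.ext hr⟩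
  obtain ⟨g, hgf, hgdeg, hg⟩ := Polynomial.lifts_and_natDegree_eq_and_monic hlifts hf
  have hgz : minpoly k z ∣ g := minpoly.dvd k z (by
    rw [← Polynomial.aeval_map_algebraMap (adjoin k s), hgf, minpoly.aeval])
  have hdeg : g.natDegree ≤ (minpoly k z).natDegree := by
    rw [hgdeg, ← (minpoly k z).natDegree_map (algebraMap k (adjoin k s))]
    exact Polynomial.natDegree_le_of_dvd hdvd ((minpoly.monic hz).map _).ne_zero
  rw [← hgf, Polynomial.eq_of_monic_of_dvd_of_natDegree_le (minpoly.monic hz) hg hgz hdeg]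

end AlgebraicIndependent

open Module Polynomial in
theorem natDegree_minpoly_le_finrank_mul {K F A : Type*} [Field K] [Field F] [Field A]
    [Algebra K F] [Algebra F A] [Algebra K A] [IsScalarTower K F A] [FiniteDimensional K F]
    {z : A} {p : F[X]} (hp : p.Monic) (hz : aeval z p = 0) :
    (minpoly K z).natDegree ≤ finrank K F * p.natDegree := by
  have hzF : IsIntegral F z := ⟨p, hp, by rwa [Polynomial.aeval_def] at hz⟩
  have : FiniteDimensional F F⟮z⟯ := adjoin.finiteDimensional hzF
  have : FiniteDimensional K F⟮z⟯ := FiniteDimensional.trans K F F⟮z⟯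
  have : IsScalarTower K F⟮z⟯ A :=
    .of_algebraMap_eq fun r => by
      rw [IsScalarTower.algebraMap_apply K F F⟮z⟯, IsScalarTower.algebraMap_apply K F A]; rfl
  calc (minpoly K z).natDegree
      = (minpoly K (AdjoinSimple.gen F z)).natDegree := by
        rw [← minpoly.algebraMap_eq (algebraMap F⟮z⟯ A).injective, AdjoinSimple.algebraMap_gen]
    _ ≤ finrank K F⟮z⟯ := minpoly.natDegree_le _
    _ = finrank K F * (minpoly F z).natDegree := by
        rw [← finrank_mul_finrank K F F⟮z⟯, adjoin.finrank hzF]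
    _ ≤ finrank K F * p.natDegree :=
        Nat.mul_le_mul_left _ (natDegree_le_natDegree (minpoly.min F z hp hz))

theorem Complex.exp_mul_I_sq (w : ℂ) : exp (w * I) ^ 2 = 2 * cos w * exp (w * I) - 1 := by
  rw [two_cos, add_mul, sq, ← exp_add, ← exp_add, neg_mul, neg_add_cancel, exp_zero]
  ring

open Polynomial in
theorem stmt_6_general (F : Subfield ℂ) (S : Set F)
    (hS : AlgebraicIndependent ℚ (fun x : ↥S => (x : F)))
    (hfin : FiniteDimensional (IntermediateField.adjoin ℚ S) F)
    (p q : ℕ) (hq : 0 < q) (hpq : Nat.Coprime p q)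
    (hcos : ((Real.cos ((p / q : ℝ) * Real.pi) : ℂ)) ^ 2 ∈ F) :
    Nat.totient q ≤ 2 * Module.finrank (IntermediateField.adjoin ℚ S) F := by
  set θ : ℝ := (p / q : ℝ) * Real.pi
  set ζ : ℂ := Complex.exp (↑(2 * θ) * Complex.I)
  have hζ : IsPrimitiveRoot ζ q := by
    convert Complex.isPrimitiveRoot_exp_of_coprime p q hq.ne' hpq using 2
    push_cast [θ]
    ring
  obtain ⟨c, hc⟩ : ∃ c : F, algebraMap F ℂ c = 2 * Complex.cos ↑(2 * θ) := by
    refine ⟨2 * (2 * ⟨_, hcos⟩ - 1), ?_⟩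
    rw [Complex.ofReal_mul, Complex.ofReal_ofNat, Complex.cos_two_mul, ← Complex.ofReal_cos]
    rfl
  have hroot : aeval ζ (X ^ 2 - C c * X + 1) = 0 := by
    simp [ζ, hc, Complex.exp_mul_I_sq]
  calc Nat.totient q = (minpoly ℚ ζ).natDegree := by
        rw [← cyclotomic_eq_minpoly_rat hζ hq, natDegree_cyclotomic]
    _ = (minpoly (IntermediateField.adjoin ℚ S) ζ).natDegree := by
        rw [hS.minpoly_adjoin_eq_map (hζ.isIntegral hq).tower_top, natDegree_map]
    _ ≤ Module.finrank (IntermediateField.adjoin ℚ S) F * (X ^ 2 - C c * X + 1).natDegree :=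
        natDegree_minpoly_le_finrank_mul (by monicity!) hroot
    _ = 2 * Module.finrank (IntermediateField.adjoin ℚ S) F := by
        rw [mul_comm, show (X ^ 2 - C c * X + 1 : F[X]).natDegree = 2 by compute_degree!]

/-- Let F be a subfield of ℂ, T = ℚ(S) ⊆ F with S algebraically independent over
ℚ (S = ∅ allowed), and n = [F : T] finite. If p, q are coprime positive integers with
cos²((p/q)π) ∈ F, then φ(q) ≤ 2n. -/
theorem stmt_6 (F : Subfield ℂ) (S : Set F)
    (hS : AlgebraicIndependent ℚ (fun x : ↥S => (x : F)))
    (hfin : FiniteDimensional (IntermediateField.adjoin ℚ S) F)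
    (p q : ℕ) (hp : 0 < p) (hq : 0 < q) (hpq : Nat.Coprime p q)
    (hcos : ((Real.cos ((p / q : ℝ) * Real.pi) : ℂ)) ^ 2 ∈ F) :
    Nat.totient q ≤ 2 * Module.finrank (IntermediateField.adjoin ℚ S) F :=
  stmt_6_general F S hS hfin p q hq hpq hcos
end
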